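/- In the complete bipartite graph K_{m,n} with m,n ≥ 1 (and not both equal to 1 trivializing the formula), every edge e has edge betweenness centrality B'(e) = 2 + 2(n−1)/m + 2(m−1)/n. In particular K_{m,n} is edge-betweenness-uniform. -/

import Mathlib

open SimpleGraph Finset

/-- The number of shortest paths between `x` and `y` in `G`. -/
noncomputable def numShortestPaths {V : Type*} (G : SimpleGraph V) (x y : V) : ℕ :=
  Nat.card {p : G.Walk x y // p.length = G.dist x y}

/-- The number of shortest paths between `x` and `y` in `G` that contain the edge `e`. -/
noncomputable def numShortestPathsThru {V : Type*} (G : SimpleGraph V) (x y : V)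
    (e : Sym2 V) : ℕ :=
  Nat.card {p : G.Walk x y // p.length = G.dist x y ∧ e ∈ p.edges}

open Classical in
/-- The edge betweenness centrality of `e`: the sum over ordered pairs of distinct
vertices `(x, y)` of the fraction of shortest `x`-`y` paths containing `e`. -/
noncomputable def edgeBetweenness {V : Type*} [Fintype V] (G : SimpleGraph V)
    (e : Sym2 V) : ℚ :=
  ∑ x : V, ∑ y : V, if x = y then 0 else
    (numShortestPathsThru G x y e : ℚ) / (numShortestPaths G x y)

/-!
In `K_{m,n}` two vertices on opposite sides are adjacent, and two distinct vertices on the same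
side are at distance 2, joined by exactly one shortest path through each vertex of the other
side. So for the edge `ab` the ordered pairs `(a, b)` and `(b, a)` contribute `1` each, each of
the `2(m - 1)` ordered pairs of distinct vertices of `a`'s side containing `a` contributes
`1/n`, each of the `2(n - 1)` such pairs on `b`'s side contributes `1/m`, and nothing else
contributes.
-/

namespace SimpleGraph

variable {V : Type*} {G : SimpleGraph V} {u v : V}

theorem Walk.eq_toWalk_of_length_eq_one (h : G.Adj u v) {p : G.Walk u v} (hp : p.length = 1) :
    p = h.toWalk := by
  cases p with
  | nil => simp at hp
  | cons _ q => cases q with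
    | nil => rfl
    | cons _ _ => simp at hp

theorem Walk.mem_edges_iff_of_length_eq_two {p : G.Walk u v} (hp : p.length = 2) (e : Sym2 V) :
    e ∈ p.edges ↔ e = s(u, p.snd) ∨ e = s(p.snd, v) := by
  rcases p with _ | ⟨_, _ | ⟨_, _ | _⟩⟩ <;> simp at hp ⊢

theorem dist_eq_two_iff :
    G.dist u v = 2 ↔ u ≠ v ∧ ¬G.Adj u v ∧ (G.commonNeighbors u v).Nonempty := by
  rw [dist, ENat.toNat_eq_iff two_ne_zero, ← edist_eq_two_iff]
  rfl

end SimpleGraph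

section ShortestPaths

variable {V : Type*} {G : SimpleGraph V} {u v : V}

theorem numShortestPaths_of_adj (h : G.Adj u v) : numShortestPaths G u v = 1 := by
  rw [numShortestPaths, dist_eq_one_iff_adj.mpr h, Nat.card_eq_one_iff_exists]
  exact ⟨⟨h.toWalk, h.length_toWalk⟩,
    fun p => Subtype.ext (Walk.eq_toWalk_of_length_eq_one h p.2)⟩

theorem numShortestPathsThru_of_adj [DecidableEq V] (h : G.Adj u v) (e : Sym2 V) :
    numShortestPathsThru G u v e = if e = s(u, v) then 1 else 0 := by
  rw [numShortestPathsThru, dist_eq_one_iff_adj.mpr h]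
  split_ifs with he
  · rw [Nat.card_eq_one_iff_exists]
    exact ⟨⟨h.toWalk, h.length_toWalk, by simp [he]⟩,
      fun p => Subtype.ext (Walk.eq_toWalk_of_length_eq_one h p.2.1)⟩
  · rw [Nat.card_eq_zero]
    left
    refine ⟨fun ⟨p, hp, hep⟩ => he ?_⟩
    simpa [Walk.eq_toWalk_of_length_eq_one h hp] using hep

theorem numShortestPaths_of_dist_eq_two (h : G.dist u v = 2) :
    numShortestPaths G u v = Nat.card (G.commonNeighbors u v) := by
  rw [numShortestPaths, h]
  exact Nat.card_congr (G.walkLengthTwoEquivCommonNeighbors u v)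

theorem numShortestPathsThru_of_dist_eq_two (h : G.dist u v = 2) (e : Sym2 V) :
    numShortestPathsThru G u v e =
      Nat.card {w | w ∈ G.commonNeighbors u v ∧ (e = s(u, w) ∨ e = s(w, v))} := by
  rw [numShortestPathsThru, h]
  exact Nat.card_congr <| (Equiv.subtypeSubtypeEquivSubtypeInter _ _).symm.trans <|
    ((G.walkLengthTwoEquivCommonNeighbors u v).subtypeEquiv fun p =>
      Walk.mem_edges_iff_of_length_eq_two p.2 e).trans
    (Equiv.subtypeSubtypeEquivSubtypeInter _ _)

end ShortestPaths

noncomputable def pairDependency {V : Type*} (G : SimpleGraph V) (x y : V) (e : Sym2 V) : ℚ :=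
  (numShortestPathsThru G x y e : ℚ) / numShortestPaths G x y

theorem edgeBetweenness_eq_sum {V : Type*} [Fintype V] [DecidableEq V] (G : SimpleGraph V)
    (e : Sym2 V) :
    edgeBetweenness G e = ∑ x, ∑ y, if x = y then 0 else pairDependency G x y e := by
  unfold edgeBetweenness pairDependency
  congr!

theorem sum_sum_offDiag_of_eq_or_eq {α : Type*} [Fintype α] [DecidableEq α] (a : α) (c : ℚ)
    (f : α → α → ℚ) (hf : ∀ x y, x ≠ y → f x y = if a = x ∨ a = y then c else 0) :
    ∑ x, ∑ y, (if x = y then 0 else f x y) = 2 * (Fintype.card α - 1) * c := by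
  have hdecomp (x y : α) : (if x = y then 0 else f x y) =
      (if a = x ∧ x ≠ y then c else 0) + (if a = y ∧ x ≠ y then c else 0) := by
    by_cases hxy : x = y
    · simp [hxy]
    · rw [if_neg hxy, hf x y hxy]
      by_cases hx : a = x <;> by_cases hy : a = y <;> simp_all
  simp only [hdecomp, Finset.sum_add_distrib, ite_and, Finset.sum_ite_eq, Finset.mem_univ, if_true,
    Finset.sum_ite_irrel, Finset.sum_const_zero]
  simp only [Finset.sum_ite, Finset.sum_const_zero, add_zero, Finset.sum_const, ne_comm (a := a),
    Finset.filter_ne', Finset.card_erase_of_mem (Finset.mem_univ a), Finset.card_univ,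
    nsmul_eq_mul]
  rw [Nat.cast_sub (Fintype.card_pos_iff.mpr ⟨a⟩)]
  ring

namespace completeBipartiteGraph

open Sum

variable {α β : Type*}

local notation "K" => completeBipartiteGraph α β

theorem commonNeighbors_inl_inl (a a' : α) :
    (K).commonNeighbors (inl a) (inl a') = Set.range inr := by
  ext (c | d) <;> simp [mem_commonNeighbors]

theorem commonNeighbors_inr_inr (b b' : β) :
    (K).commonNeighbors (inr b) (inr b') = Set.range inl := by
  ext (c | d) <;> simp [mem_commonNeighbors]

theorem pairDependency_inl_inr [DecidableEq α] [DecidableEq β] (a a' : α) (b b' : β) :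
    pairDependency K (inl a') (inr b') s(inl a, inr b) = if a = a' ∧ b = b' then 1 else 0 := by
  rw [pairDependency, numShortestPathsThru_of_adj (by simp), numShortestPaths_of_adj (by simp)]
  simp

theorem pairDependency_inr_inl [DecidableEq α] [DecidableEq β] (a a' : α) (b b' : β) :
    pairDependency K (inr b') (inl a') s(inl a, inr b) = if a = a' ∧ b = b' then 1 else 0 := by
  rw [pairDependency, numShortestPathsThru_of_adj (by simp), numShortestPaths_of_adj (by simp)]
  simp

theorem pairDependency_inl_inl [DecidableEq α] (a : α) (b : β) {a' a'' : α} (h : a' ≠ a'') :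
    pairDependency K (inl a') (inl a'') s(inl a, inr b) =
      if a = a' ∨ a = a'' then (Nat.card β : ℚ)⁻¹ else 0 := by
  have hdist : (K).dist (inl a') (inl a'') = 2 :=
    dist_eq_two_iff.mpr ⟨by simpa using h, by simp,
      commonNeighbors_inl_inl a' a'' ▸ ⟨_, Set.mem_range_self b⟩⟩
  have hthru : {w | w ∈ Set.range inr ∧
      (s(inl a, inr b) = s(inl a', w) ∨ s(inl a, inr b) = s(w, inl a''))} =
      {w | (a = a' ∨ a = a'') ∧ w = inr b} := by
    ext (c | d) <;> simp [eq_comm (a := b), or_and_right]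
  rw [pairDependency, numShortestPathsThru_of_dist_eq_two hdist,
    numShortestPaths_of_dist_eq_two hdist, commonNeighbors_inl_inl,
    Nat.card_range_of_injective inr_injective, hthru]
  split_ifs with ha <;> simp [ha]

theorem pairDependency_inr_inr [DecidableEq β] (a : α) (b : β) {b' b'' : β} (h : b' ≠ b'') :
    pairDependency K (inr b') (inr b'') s(inl a, inr b) =
      if b = b' ∨ b = b'' then (Nat.card α : ℚ)⁻¹ else 0 := by
  have hdist : (K).dist (inr b') (inr b'') = 2 :=
    dist_eq_two_iff.mpr ⟨by simpa using h, by simp,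
      commonNeighbors_inr_inr b' b'' ▸ ⟨_, Set.mem_range_self a⟩⟩
  have hthru : {w | w ∈ Set.range inl ∧
      (s(inl a, inr b) = s(inr b', w) ∨ s(inl a, inr b) = s(w, inr b''))} =
      {w | w = inl a ∧ (b = b' ∨ b = b'')} := by
    ext (c | d) <;> simp [eq_comm (a := a), and_or_left]
  rw [pairDependency, numShortestPathsThru_of_dist_eq_two hdist,
    numShortestPaths_of_dist_eq_two hdist, commonNeighbors_inr_inr,
    Nat.card_range_of_injective inl_injective, hthru]
  split_ifs with hb <;> simp [hb]

theorem exists_eq_of_mem_edgeSet {e : Sym2 (α ⊕ β)} (he : e ∈ (K).edgeSet) :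
    ∃ a b, e = s(inl a, inr b) := by
  induction e using Sym2.ind with
  | _ u v =>
    rcases u with a | b <;> rcases v with a' | b' <;> simp at he
    · exact ⟨a, b', rfl⟩
    · exact ⟨a', b, Sym2.eq_swap⟩

theorem edgeBetweenness_of_mem_edgeSet [Fintype α] [Fintype β] {e : Sym2 (α ⊕ β)}
    (he : e ∈ (K).edgeSet) :
    edgeBetweenness K e =
      2 + 2 * ((Fintype.card β : ℚ) - 1) / Fintype.card α +
        2 * ((Fintype.card α : ℚ) - 1) / Fintype.card β := by
  classical
  obtain ⟨a, b, rfl⟩ := exists_eq_of_mem_edgeSet he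
  have hleft := sum_sum_offDiag_of_eq_or_eq a (Nat.card β : ℚ)⁻¹
    (fun a' a'' => pairDependency K (inl a') (inl a'') s(inl a, inr b))
    (fun _ _ => pairDependency_inl_inl a b)
  have hright := sum_sum_offDiag_of_eq_or_eq b (Nat.card α : ℚ)⁻¹
    (fun b' b'' => pairDependency K (inr b') (inr b'') s(inl a, inr b))
    (fun _ _ => pairDependency_inr_inr a b)
  rw [edgeBetweenness_eq_sum]
  simp only [Fintype.sum_sum_type, inl.injEq, inr.injEq, reduceCtorEq, if_false,
    pairDependency_inl_inr, pairDependency_inr_inl, Finset.sum_add_distrib, hleft, hright,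
    Nat.card_eq_fintype_card, ite_and, Finset.sum_ite_eq, Finset.mem_univ, if_true,
    Finset.sum_ite_irrel, Finset.sum_const_zero]
  ring

end completeBipartiteGraph

theorem stmt3_general (m n : ℕ) :
    (∀ e ∈ (completeBipartiteGraph (Fin m) (Fin n)).edgeSet,
      edgeBetweenness (completeBipartiteGraph (Fin m) (Fin n)) e =
        2 + 2 * ((n : ℚ) - 1) / m + 2 * ((m : ℚ) - 1) / n) ∧
    (∀ e₁ ∈ (completeBipartiteGraph (Fin m) (Fin n)).edgeSet,
     ∀ e₂ ∈ (completeBipartiteGraph (Fin m) (Fin n)).edgeSet,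
      edgeBetweenness (completeBipartiteGraph (Fin m) (Fin n)) e₁ =
        edgeBetweenness (completeBipartiteGraph (Fin m) (Fin n)) e₂) := by
  have formula (e) (he : e ∈ (completeBipartiteGraph (Fin m) (Fin n)).edgeSet) :
      edgeBetweenness (completeBipartiteGraph (Fin m) (Fin n)) e =
        2 + 2 * ((n : ℚ) - 1) / m + 2 * ((m : ℚ) - 1) / n := by
    simpa using completeBipartiteGraph.edgeBetweenness_of_mem_edgeSet he
  exact ⟨formula, fun e₁ h₁ e₂ h₂ => (formula e₁ h₁).trans (formula e₂ h₂).symm⟩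

theorem stmt3 (m n : ℕ) (hm : 1 ≤ m) (hn : 1 ≤ n) (h : ¬(m = 1 ∧ n = 1)) :
    (∀ e ∈ (completeBipartiteGraph (Fin m) (Fin n)).edgeSet,
      edgeBetweenness (completeBipartiteGraph (Fin m) (Fin n)) e =
        2 + 2 * ((n : ℚ) - 1) / m + 2 * ((m : ℚ) - 1) / n) ∧
    (∀ e₁ ∈ (completeBipartiteGraph (Fin m) (Fin n)).edgeSet,
     ∀ e₂ ∈ (completeBipartiteGraph (Fin m) (Fin n)).edgeSet,
      edgeBetweenness (completeBipartiteGraph (Fin m) (Fin n)) e₁ =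
        edgeBetweenness (completeBipartiteGraph (Fin m) (Fin n)) e₂) :=
  stmt3_general m n
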